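/- arXiv:2605.01814 — 2 statements merged into one kernel-verified Lean document; each statement's English description precedes it below -/
import Mathlib

section
/- Let c : ℝ → ℝ be continuously differentiable with c(θ) > 0 and c'(θ) ≥ 0 for all θ, let T > 0, and let u : ℝ × ℝ → ℝ be twice continuously differentiable solving u_tt = c(u)² u_xx on [0,T] × ℝ. Let t ∈ (0,T] and let x₋ : [0,t] → ℝ be differentiable with x₋'(τ) = −c(u(τ, x₋(τ))) for all τ ∈ [0,t]. Then the function τ ↦ R(τ, x₋(τ)) / √( c(u(τ, x₋(τ))) ) is nonincreasing (antitone) on [0,t], where R := u_t + c(u)u_x. -/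
/-- Partial derivative in the first (time) variable. -/
noncomputable def pdt (u : ℝ × ℝ → ℝ) : ℝ × ℝ → ℝ :=
  fun p => deriv (fun s => u (s, p.2)) p.1

/-- Partial derivative in the second (space) variable. -/
noncomputable def pdx (u : ℝ × ℝ → ℝ) : ℝ × ℝ → ℝ :=
  fun p => deriv (fun y => u (p.1, y)) p.2

/-- The Riemann variable `R = u_t + c(u) u_x`. -/
noncomputable def Rv (c : ℝ → ℝ) (u : ℝ × ℝ → ℝ) : ℝ × ℝ → ℝ :=
  fun p => pdt u p + c (u p) * pdx u p

/-- The Riemann variable `S = u_t - c(u) u_x`. -/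
noncomputable def Sv (c : ℝ → ℝ) (u : ℝ × ℝ → ℝ) : ℝ × ℝ → ℝ :=
  fun p => pdt u p - c (u p) * pdx u p
lemma pdt_eq_fderiv {F : ℝ × ℝ → ℝ} {p : ℝ × ℝ} (h : DifferentiableAt ℝ F p) :
    pdt F p = fderiv ℝ F p (1, 0) := by
  have hg : HasDerivAt (fun s : ℝ => ((s, p.2) : ℝ × ℝ)) ((1 : ℝ), (0 : ℝ)) p.1 :=
    (hasDerivAt_id p.1).prodMk (hasDerivAt_const p.1 p.2)
  have h' : HasFDerivAt F (fderiv ℝ F p) (p.1, p.2) := by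
    rw [Prod.mk.eta]; exact h.hasFDerivAt
  have := h'.comp_hasDerivAt p.1 hg
  simpa [pdt, Function.comp_def] using this.deriv

lemma pdx_eq_fderiv {F : ℝ × ℝ → ℝ} {p : ℝ × ℝ} (h : DifferentiableAt ℝ F p) :
    pdx F p = fderiv ℝ F p (0, 1) := by
  have hg : HasDerivAt (fun y : ℝ => ((p.1, y) : ℝ × ℝ)) ((0 : ℝ), (1 : ℝ)) p.2 :=
    (hasDerivAt_const p.2 p.1).prodMk (hasDerivAt_id p.2)
  have h' : HasFDerivAt F (fderiv ℝ F p) (p.1, p.2) := by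
    rw [Prod.mk.eta]; exact h.hasFDerivAt
  have := h'.comp_hasDerivAt p.2 hg
  simpa [pdx, Function.comp_def] using this.deriv

lemma aux_nonpos (cp S ux cv q : ℝ) (hcp : 0 ≤ cp) (hq : 0 < q) (hq2 : q * q = cv) :
    (cp * S * ux * q - ((S + cv * ux) + cv * ux) * (1 / (2 * q) * (cp * S))) / q ^ 2 ≤ 0 := by
  have hN : cp * S * ux * q - ((S + cv * ux) + cv * ux) * (1 / (2 * q) * (cp * S))
      = -(cp * S ^ 2) / (2 * q) := by
    rw [← hq2]; field_simp; ring
  rw [hN]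
  apply div_nonpos_of_nonpos_of_nonneg
  · apply div_nonpos_of_nonpos_of_nonneg
    · nlinarith [sq_nonneg S]
    · positivity
  · positivity

theorem stmt4 (c : ℝ → ℝ) (u : ℝ × ℝ → ℝ) (T t : ℝ) (xm : ℝ → ℝ)
    (hc : ContDiff ℝ 1 c)
    (hcpos : ∀ θ, 0 < c θ)
    (hcmono : ∀ θ, 0 ≤ deriv c θ)
    (hT : 0 < T)
    (hu : ContDiff ℝ 2 u)
    (hwave : ∀ p : ℝ × ℝ, p.1 ∈ Set.Icc 0 T →
      pdt (pdt u) p = (c (u p)) ^ 2 * pdx (pdx u) p)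
    (ht : t ∈ Set.Ioc 0 T)
    (hxm : ∀ τ ∈ Set.Icc 0 t, HasDerivAt xm (-(c (u (τ, xm τ)))) τ) :
    AntitoneOn (fun τ => Rv c u (τ, xm τ) / Real.sqrt (c (u (τ, xm τ)))) (Set.Icc 0 t) := by
  have hu2 : Differentiable ℝ u := hu.differentiable (by norm_num)
  have hD : ContDiff ℝ 1 (fderiv ℝ u) := hu.fderiv_right (by norm_num)
  have hDdiff : Differentiable ℝ (fderiv ℝ u) := hD.differentiable one_ne_zero
  set Ut : ℝ × ℝ → ℝ := fun p => fderiv ℝ u p (1, 0) with hUtdef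
  set Ux : ℝ × ℝ → ℝ := fun p => fderiv ℝ u p (0, 1) with hUxdef
  have hpdtu : ∀ p, pdt u p = Ut p := fun p => pdt_eq_fderiv (hu2 p)
  have hpdxu : ∀ p, pdx u p = Ux p := fun p => pdx_eq_fderiv (hu2 p)
  -- main derivative computation
  have key : ∀ τ ∈ Set.Icc 0 t, ∃ E : ℝ,
      HasDerivAt (fun τ => Rv c u (τ, xm τ) / Real.sqrt (c (u (τ, xm τ)))) E τ ∧ E ≤ 0 := by
    intro τ hτ
    set p : ℝ × ℝ := (τ, xm τ) with hpdef
    set cv : ℝ := c (u p) with hcvdef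
    set cp : ℝ := deriv c (u p) with hcpdef
    set q : ℝ := Real.sqrt cv with hqdef
    have hcv : 0 < cv := hcpos _
    have hq : 0 < q := Real.sqrt_pos.2 hcv
    have hq2 : q * q = cv := Real.mul_self_sqrt hcv.le
    set B : (ℝ × ℝ) →L[ℝ] (ℝ × ℝ) →L[ℝ] ℝ := fderiv ℝ (fderiv ℝ u) p with hBdef
    have hBf : HasFDerivAt (fderiv ℝ u) B p := (hDdiff p).hasFDerivAt
    have hsym : ∀ v w, B v w = B w v :=
      second_derivative_symmetric (fun y => (hu2 y).hasFDerivAt) hBf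
    -- Ut, Ux have fderivs expressed through B
    have hUtf : HasFDerivAt Ut ((ContinuousLinearMap.apply ℝ ℝ ((1:ℝ),(0:ℝ))).comp B) p :=
      (ContinuousLinearMap.apply ℝ ℝ ((1:ℝ),(0:ℝ))).hasFDerivAt.comp p hBf
    have hUxf : HasFDerivAt Ux ((ContinuousLinearMap.apply ℝ ℝ ((0:ℝ),(1:ℝ))).comp B) p :=
      (ContinuousLinearMap.apply ℝ ℝ ((0:ℝ),(1:ℝ))).hasFDerivAt.comp p hBf
    -- wave equation in terms of B
    have e1 : pdt (pdt u) p = B (1, 0) (1, 0) := by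
      rw [show pdt u = Ut from funext hpdtu, pdt_eq_fderiv hUtf.differentiableAt, hUtf.fderiv]
      rfl
    have e2 : pdx (pdx u) p = B (0, 1) (0, 1) := by
      rw [show pdx u = Ux from funext hpdxu, pdx_eq_fderiv hUxf.differentiableAt, hUxf.fderiv]
      rfl
    have hτT : p.1 ∈ Set.Icc 0 T := ⟨hτ.1, hτ.2.trans ht.2⟩
    have hw : B (1, 0) (1, 0) = cv ^ 2 * B (0, 1) (0, 1) := by
      have := hwave p hτT; rw [e1, e2] at this; exact this
    -- the curve
    have hγ : HasDerivAt (fun τ : ℝ => ((τ, xm τ) : ℝ × ℝ)) ((1 : ℝ), -cv) τ :=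
      (hasDerivAt_id τ).prodMk (hxm τ hτ)
    have hvv : ((1 : ℝ), -cv) = ((1:ℝ),(0:ℝ)) + (-cv) • ((0:ℝ),(1:ℝ)) := by
      simp [Prod.ext_iff]
    set Sval : ℝ := Ut p - cv * Ux p with hSdef
    have huτ : HasDerivAt (fun τ => u (τ, xm τ)) Sval τ := by
      have h := (hu2 p).hasFDerivAt.comp_hasDerivAt τ hγ
      have hval : fderiv ℝ u p ((1 : ℝ), -cv) = Sval := by
        rw [hvv, map_add, map_smul, smul_eq_mul]; simp [hSdef, hUtdef, hUxdef]; ring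
      rw [hval] at h; exact h
    have hcd : HasDerivAt c cp (u p) := (hc.differentiable one_ne_zero (u p)).hasDerivAt
    have hcτ : HasDerivAt (fun τ => c (u (τ, xm τ))) (cp * Sval) τ := hcd.comp τ huτ
    have hUtτ : HasDerivAt (fun τ => Ut (τ, xm τ)) (B (1, -cv) (1, 0)) τ := by
      have h := hUtf.comp_hasDerivAt τ hγ
      exact h
    have hUxτ : HasDerivAt (fun τ => Ux (τ, xm τ)) (B (1, -cv) (0, 1)) τ := by
      have h := hUxf.comp_hasDerivAt τ hγ
      exact h
    have hBv : ∀ w, B ((1:ℝ), -cv) w = B (1, 0) w - cv * B (0, 1) w := by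
      intro w
      rw [hvv, map_add, map_smul]
      simp [smul_eq_mul]
      ring
    -- R along the curve
    have hRτ : HasDerivAt (fun τ => Ut (τ, xm τ) + c (u (τ, xm τ)) * Ux (τ, xm τ))
        (cp * Sval * Ux p) τ := by
      have h := hUtτ.add (hcτ.mul hUxτ)
      have hval : B (1, -cv) (1, 0) + (cp * Sval * Ux p + cv * B (1, -cv) (0, 1))
          = cp * Sval * Ux p := by
        rw [hBv, hBv, hsym (0,1) (1,0), hw]; ring
      rw [hval] at h; exact h
    -- sqrt(c(u)) along the curve
    have hsq : HasDerivAt (fun τ => Real.sqrt (c (u (τ, xm τ))))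
        (1 / (2 * q) * (cp * Sval)) τ :=
      (Real.hasDerivAt_sqrt hcv.ne').comp τ hcτ
    have hgd : HasDerivAt (fun τ => (Ut (τ, xm τ) + c (u (τ, xm τ)) * Ux (τ, xm τ)) /
          Real.sqrt (c (u (τ, xm τ))))
        ((cp * Sval * Ux p * q - (Ut p + cv * Ux p) * (1 / (2 * q) * (cp * Sval))) / q ^ 2) τ :=
      hRτ.div hsq hq.ne'
    refine ⟨(cp * Sval * Ux p * q - (Ut p + cv * Ux p) * (1 / (2 * q) * (cp * Sval))) / q ^ 2, ?_, ?_⟩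
    · have hfun : (fun τ => Rv c u (τ, xm τ) / Real.sqrt (c (u (τ, xm τ))))
          = fun τ => (Ut (τ, xm τ) + c (u (τ, xm τ)) * Ux (τ, xm τ)) /
              Real.sqrt (c (u (τ, xm τ))) := by
        funext σ; rw [Rv, hpdtu, hpdxu]
      rw [hfun]; exact hgd
    · have hut : Ut p = Sval + cv * Ux p := by rw [hSdef]; ring
      rw [hut]
      exact aux_nonpos cp Sval (Ux p) cv q (hcmono (u p)) hq hq2
  -- conclude
  apply antitoneOn_of_deriv_nonpos (convex_Icc 0 t)
  · intro τ hτ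
    obtain ⟨E, hE, _⟩ := key τ hτ
    exact hE.continuousAt.continuousWithinAt
  · intro τ hτ
    rw [interior_Icc] at hτ
    obtain ⟨E, hE, _⟩ := key τ (Set.Ioo_subset_Icc_self hτ)
    exact hE.differentiableAt.differentiableWithinAt
  · intro τ hτ
    rw [interior_Icc] at hτ
    obtain ⟨E, hE, hE0⟩ := key τ (Set.Ioo_subset_Icc_self hτ)
    rw [hE.deriv]; exact hE0
end

section
/- Let c : ℝ → ℝ be continuously differentiable with 0 < c_* ≤ c(θ) ≤ c^* and c'(θ) ≥ 0 for all θ, and suppose A := sup_{θ ∈ ℝ} c'(θ)/(2c(θ)) is finite. Let T > 0 and let u : ℝ × ℝ → ℝ be twice continuously differentiable solving u_tt = c(u)² u_xx on [0,T] × ℝ, with Riemann variables R := u_t + c(u)u_x and S := u_t − c(u)u_x. Assume: (i) there is a constant P ≥ 0 with R(t,x) ≤ P and S(t,x) ≤ P for all (t,x) ∈ [0,T] × ℝ; (ii) R(t,x) → 0 and S(t,x) → 0 as |x| → ∞, uniformly for t ∈ [0,T]; (iii) m₀ := min{ 0, inf_{x ∈ ℝ} R(0,x), inf_{x ∈ ℝ}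 S(0,x) } is finite. Then for all (t,x) ∈ [0,T] × ℝ, R(t,x) ≥ P + (m₀ − P)·exp(A·P·t) and S(t,x) ≥ P + (m₀ − P)·exp(A·P·t). -/
open Set Filter Topology

noncomputable def Wf (σ : ℝ) (c : ℝ → ℝ) (u : ℝ × ℝ → ℝ) : ℝ × ℝ → ℝ :=
  fun p => fderiv ℝ u p (1, 0) + σ * (c (u p) * fderiv ℝ u p (0, 1))
section aux
variable {c : ℝ → ℝ} {u : ℝ × ℝ → ℝ}

lemma hasDerivAt_fst {E : Type*} [NormedAddCommGroup E] [NormedSpace ℝ E]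
    {g : ℝ × ℝ → E} {p : ℝ × ℝ} (h : DifferentiableAt ℝ g p) :
    HasDerivAt (fun s => g (s, p.2)) (fderiv ℝ g p (1, 0)) p.1 :=
  h.hasFDerivAt.comp_hasDerivAt p.1 (HasDerivAt.prodMk (hasDerivAt_id _) (hasDerivAt_const _ _))

lemma hasDerivAt_snd {E : Type*} [NormedAddCommGroup E] [NormedSpace ℝ E]
    {g : ℝ × ℝ → E} {p : ℝ × ℝ} (h : DifferentiableAt ℝ g p) :
    HasDerivAt (fun y => g (p.1, y)) (fderiv ℝ g p (0, 1)) p.2 :=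
  h.hasFDerivAt.comp_hasDerivAt p.2 (HasDerivAt.prodMk (hasDerivAt_const _ _) (hasDerivAt_id _))

lemma hasDerivAt_Wf_t (hc : ContDiff ℝ 1 c) (hu : ContDiff ℝ 2 u) (σ : ℝ) (p : ℝ × ℝ) :
    HasDerivAt (fun s => Wf σ c u (s, p.2))
      (fderiv ℝ (fderiv ℝ u) p (1, 0) (1, 0) +
        σ * ((deriv c (u p) * fderiv ℝ u p (1, 0)) * fderiv ℝ u p (0, 1) +
          c (u p) * (fderiv ℝ (fderiv ℝ u) p (1, 0) (0, 1)))) p.1 := by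
  have hf : ContDiff ℝ 1 (fderiv ℝ u) := hu.fderiv_right (by norm_num)
  have hf' : DifferentiableAt ℝ (fderiv ℝ u) p := (hf.differentiable one_ne_zero).differentiableAt
  have hD : HasDerivAt (fun s => fderiv ℝ u (s, p.2)) (fderiv ℝ (fderiv ℝ u) p (1, 0)) p.1 :=
    hasDerivAt_fst hf'
  have h10 : HasDerivAt (fun s => fderiv ℝ u (s, p.2) (1, 0))
      (fderiv ℝ (fderiv ℝ u) p (1, 0) (1, 0)) p.1 := by
    simpa using hD.clm_apply (hasDerivAt_const p.1 ((1 : ℝ), (0 : ℝ)))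
  have h01 : HasDerivAt (fun s => fderiv ℝ u (s, p.2) (0, 1))
      (fderiv ℝ (fderiv ℝ u) p (1, 0) (0, 1)) p.1 := by
    simpa using hD.clm_apply (hasDerivAt_const p.1 ((0 : ℝ), (1 : ℝ)))
  have hut : HasDerivAt (fun s => u (s, p.2)) (fderiv ℝ u p (1, 0)) p.1 :=
    hasDerivAt_fst (hu.differentiable two_ne_zero).differentiableAt
  have hcu : HasDerivAt (fun s => c (u (s, p.2))) (deriv c (u p) * fderiv ℝ u p (1, 0)) p.1 :=
    ((hc.differentiable one_ne_zero) (u p)).hasDerivAt.comp p.1 hut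
  exact h10.add (((hcu.mul h01)).const_mul σ)

lemma hasDerivAt_Wf_x (hc : ContDiff ℝ 1 c) (hu : ContDiff ℝ 2 u) (σ : ℝ) (p : ℝ × ℝ) :
    HasDerivAt (fun y => Wf σ c u (p.1, y))
      (fderiv ℝ (fderiv ℝ u) p (0, 1) (1, 0) +
        σ * ((deriv c (u p) * fderiv ℝ u p (0, 1)) * fderiv ℝ u p (0, 1) +
          c (u p) * (fderiv ℝ (fderiv ℝ u) p (0, 1) (0, 1)))) p.2 := by
  have hf : ContDiff ℝ 1 (fderiv ℝ u) := hu.fderiv_right (by norm_num)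
  have hf' : DifferentiableAt ℝ (fderiv ℝ u) p := (hf.differentiable one_ne_zero).differentiableAt
  have hD : HasDerivAt (fun y => fderiv ℝ u (p.1, y)) (fderiv ℝ (fderiv ℝ u) p (0, 1)) p.2 :=
    hasDerivAt_snd hf'
  have h10 : HasDerivAt (fun y => fderiv ℝ u (p.1, y) (1, 0))
      (fderiv ℝ (fderiv ℝ u) p (0, 1) (1, 0)) p.2 := by
    simpa using hD.clm_apply (hasDerivAt_const p.2 ((1 : ℝ), (0 : ℝ)))
  have h01 : HasDerivAt (fun y => fderiv ℝ u (p.1, y) (0, 1))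
      (fderiv ℝ (fderiv ℝ u) p (0, 1) (0, 1)) p.2 := by
    simpa using hD.clm_apply (hasDerivAt_const p.2 ((0 : ℝ), (1 : ℝ)))
  have hux : HasDerivAt (fun y => u (p.1, y)) (fderiv ℝ u p (0, 1)) p.2 :=
    hasDerivAt_snd (hu.differentiable two_ne_zero).differentiableAt
  have hcu : HasDerivAt (fun y => c (u (p.1, y))) (deriv c (u p) * fderiv ℝ u p (0, 1)) p.2 :=
    ((hc.differentiable one_ne_zero) (u p)).hasDerivAt.comp p.2 hux
  exact h10.add (((hcu.mul h01)).const_mul σ)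

lemma pdt_eq {p : ℝ × ℝ} (h : DifferentiableAt ℝ u p) :
    pdt u p = fderiv ℝ u p (1, 0) := (hasDerivAt_fst h).deriv

lemma pdx_eq {p : ℝ × ℝ} (h : DifferentiableAt ℝ u p) :
    pdx u p = fderiv ℝ u p (0, 1) := (hasDerivAt_snd h).deriv

lemma pdt_Wf (hc : ContDiff ℝ 1 c) (hu : ContDiff ℝ 2 u) (σ : ℝ) (p : ℝ × ℝ) :
    pdt (Wf σ c u) p =
      fderiv ℝ (fderiv ℝ u) p (1, 0) (1, 0) +
        σ * ((deriv c (u p) * fderiv ℝ u p (1, 0)) * fderiv ℝ u p (0, 1) +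
          c (u p) * (fderiv ℝ (fderiv ℝ u) p (1, 0) (0, 1))) :=
  (hasDerivAt_Wf_t hc hu σ p).deriv

lemma pdx_Wf (hc : ContDiff ℝ 1 c) (hu : ContDiff ℝ 2 u) (σ : ℝ) (p : ℝ × ℝ) :
    pdx (Wf σ c u) p =
      fderiv ℝ (fderiv ℝ u) p (0, 1) (1, 0) +
        σ * ((deriv c (u p) * fderiv ℝ u p (0, 1)) * fderiv ℝ u p (0, 1) +
          c (u p) * (fderiv ℝ (fderiv ℝ u) p (0, 1) (0, 1))) :=
  (hasDerivAt_Wf_x hc hu σ p).deriv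

lemma pdt_pdt (hu : ContDiff ℝ 2 u) (p : ℝ × ℝ) :
    pdt (pdt u) p = fderiv ℝ (fderiv ℝ u) p (1, 0) (1, 0) := by
  have hf : ContDiff ℝ 1 (fderiv ℝ u) := hu.fderiv_right (by norm_num)
  have h : pdt u = fun q => fderiv ℝ u q (1, 0) :=
    funext fun q => pdt_eq (hu.differentiable two_ne_zero).differentiableAt
  have hD : HasDerivAt (fun s => fderiv ℝ u (s, p.2) (1, 0))
      (fderiv ℝ (fderiv ℝ u) p (1, 0) (1, 0)) p.1 := by
    simpa using (hasDerivAt_fst ((hf.differentiable one_ne_zero).differentiableAt (x := p))).clm_apply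
      (hasDerivAt_const p.1 ((1 : ℝ), (0 : ℝ)))
  rw [show pdt (pdt u) p = deriv (fun s => pdt u (s, p.2)) p.1 from rfl, h]
  exact hD.deriv

lemma pdx_pdx (hu : ContDiff ℝ 2 u) (p : ℝ × ℝ) :
    pdx (pdx u) p = fderiv ℝ (fderiv ℝ u) p (0, 1) (0, 1) := by
  have hf : ContDiff ℝ 1 (fderiv ℝ u) := hu.fderiv_right (by norm_num)
  have h : pdx u = fun q => fderiv ℝ u q (0, 1) :=
    funext fun q => pdx_eq (hu.differentiable two_ne_zero).differentiableAt
  have hD : HasDerivAt (fun y => fderiv ℝ u (p.1, y) (0, 1))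
      (fderiv ℝ (fderiv ℝ u) p (0, 1) (0, 1)) p.2 := by
    simpa using (hasDerivAt_snd ((hf.differentiable one_ne_zero).differentiableAt (x := p))).clm_apply
      (hasDerivAt_const p.2 ((0 : ℝ), (1 : ℝ)))
  rw [show pdx (pdx u) p = deriv (fun y => pdx u (p.1, y)) p.2 from rfl, h]
  exact hD.deriv

lemma fderiv_symm (hu : ContDiff ℝ 2 u) (p : ℝ × ℝ) :
    fderiv ℝ (fderiv ℝ u) p (1, 0) (0, 1) = fderiv ℝ (fderiv ℝ u) p (0, 1) (1, 0) := by
  have hf : ContDiff ℝ 1 (fderiv ℝ u) := hu.fderiv_right (by norm_num)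
  exact second_derivative_symmetric
    (fun y => ((hu.differentiable two_ne_zero) y).hasFDerivAt)
    ((hf.differentiable one_ne_zero) p).hasFDerivAt (1, 0) (0, 1)

lemma pde (hc : ContDiff ℝ 1 c) (hu : ContDiff ℝ 2 u) {σ : ℝ} (hσ : σ * σ = 1) (p : ℝ × ℝ)
    (hw : pdt (pdt u) p = (c (u p)) ^ 2 * pdx (pdx u) p) :
    pdt (Wf σ c u) p = σ * (c (u p) * pdx (Wf σ c u) p) +
      σ * (deriv c (u p) * fderiv ℝ u p (0, 1)) * Wf (-σ) c u p := by
  have hw' : fderiv ℝ (fderiv ℝ u) p (1, 0) (1, 0)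
      = (c (u p)) ^ 2 * fderiv ℝ (fderiv ℝ u) p (0, 1) (0, 1) := by
    rw [← pdt_pdt hu, ← pdx_pdx hu]; exact hw
  have hs := fderiv_symm hu p
  rw [pdt_Wf hc hu, pdx_Wf hc hu, Wf]
  linear_combination hw' + (σ * c (u p)) * hs +
    (-((c (u p)) ^ 2 * fderiv ℝ (fderiv ℝ u) p (0, 1) (0, 1))) * hσ

lemma core (hc : ContDiff ℝ 1 c) (hu : ContDiff ℝ 2 u) {σ A P ε ts xs : ℝ} {φ : ℝ → ℝ}
    (hσ : σ * σ = 1) (htpos : 0 < ts)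
    (hwave : pdt (pdt u) (ts, xs) = (c (u (ts, xs))) ^ 2 * pdx (pdx u) (ts, xs))
    (hcpos : 0 < c (u (ts, xs))) (hd0 : 0 ≤ deriv c (u (ts, xs)))
    (hkA : deriv c (u (ts, xs)) / (2 * c (u (ts, xs))) ≤ A)
    (hP : 0 ≤ P) (hA0 : 0 ≤ A) (hε : 0 < ε)
    (hφ' : HasDerivAt φ ((A * P + ε) * (φ ts - P)) ts)
    (hφneg : φ ts < 0)
    (hW0 : Wf σ c u (ts, xs) = φ ts)
    (hVlow : φ ts ≤ Wf (-σ) c u (ts, xs)) (hVP : Wf (-σ) c u (ts, xs) ≤ P)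
    (hWmin : ∀ y, Wf σ c u (ts, xs) ≤ Wf σ c u (ts, y))
    (hWpast : ∀ s ∈ Set.Ico 0 ts, φ s < Wf σ c u (s, xs)) : False := by
  set p : ℝ × ℝ := (ts, xs) with hp
  -- spatial derivative vanishes at the minimum
  have hloc : IsLocalMin (fun y => Wf σ c u (ts, y)) xs :=
    Filter.Eventually.of_forall fun y => hWmin y
  have hx0 : pdx (Wf σ c u) p = 0 := hloc.deriv_eq_zero
  -- the Riemann equation at p
  have hpde := pde hc hu hσ p hwave
  rw [hx0] at hpde
  -- express σ * u_x in terms of W - V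
  have hWV : 2 * (σ * (c (u p) * fderiv ℝ u p (0, 1))) = φ ts - Wf (-σ) c u p := by
    have h1 : Wf σ c u p = fderiv ℝ u p (1, 0) + σ * (c (u p) * fderiv ℝ u p (0, 1)) := rfl
    have h2 : Wf (-σ) c u p = fderiv ℝ u p (1, 0) + (-σ) * (c (u p) * fderiv ℝ u p (0, 1)) := rfl
    rw [h1] at hW0
    rw [h2]; linarith
  set V := Wf (-σ) c u p with hV
  set k := deriv c (u p) / (2 * c (u p)) with hk
  have hk0 : 0 ≤ k := div_nonneg hd0 (by linarith)
  -- pdt W p = k * (φ ts - V) * V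
  have hval : pdt (Wf σ c u) p = k * ((φ ts - V) * V) := by
    rw [hpde]
    have : σ * (deriv c (u p) * fderiv ℝ u p (0, 1)) * V
        = deriv c (u p) / (2 * c (u p)) * ((2 * (σ * (c (u p) * fderiv ℝ u p (0, 1)))) * V) := by
      field_simp
    rw [this, hWV]; ring
  -- lower bound: k * ((φ - V) * V) ≥ A * P * (φ - P)
  have hX : P * (φ ts - P) ≤ (φ ts - V) * V := by nlinarith [mul_nonneg (sub_nonneg.2 hVlow) hP]
  have hlow : A * P * (φ ts - P) ≤ pdt (Wf σ c u) p := by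
    rw [hval]
    rcases le_or_gt 0 ((φ ts - V) * V) with hXpos | hXneg
    · have h0 : (0:ℝ) ≤ A * P := mul_nonneg hA0 hP
      have h1 : A * P * (φ ts - P) ≤ 0 := mul_nonpos_of_nonneg_of_nonpos h0 (by linarith)
      nlinarith
    · nlinarith [mul_le_mul_of_nonneg_left hX hA0]
  -- upper bound from first-touching in time
  have hWt : HasDerivAt (fun s => Wf σ c u (s, xs)) (pdt (Wf σ c u) p) ts :=
    (hasDerivAt_Wf_t hc hu σ p).differentiableAt.hasDerivAt
  have hg : HasDerivAt (fun s => Wf σ c u (s, xs) - φ s)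
      (pdt (Wf σ c u) p - (A * P + ε) * (φ ts - P)) ts := hWt.sub hφ'
  have hslope : Filter.Tendsto (slope (fun s => Wf σ c u (s, xs) - φ s) ts)
      (nhdsWithin ts (Set.Iio ts)) (nhds (pdt (Wf σ c u) p - (A * P + ε) * (φ ts - P))) :=
    (hasDerivAt_iff_tendsto_slope.mp hg).mono_left
      (nhdsWithin_mono ts fun s hs => ne_of_lt hs)
  have hub : pdt (Wf σ c u) p - (A * P + ε) * (φ ts - P) ≤ 0 := by
    refine le_of_tendsto hslope ?_
    filter_upwards [Ioo_mem_nhdsLT_of_mem (Set.mem_Ioc.2 ⟨htpos, le_rfl⟩)] with s hs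
    have hgs : 0 < Wf σ c u (s, xs) - φ s := sub_pos.2 (hWpast s ⟨le_of_lt hs.1, hs.2⟩)
    have : slope (fun s => Wf σ c u (s, xs) - φ s) ts s
        = ((Wf σ c u (s, xs) - φ s) - (Wf σ c u p - φ ts)) / (s - ts) := by
      rw [slope_def_field]
    rw [this, hW0]
    simp only [sub_self, sub_zero]
    exact le_of_lt (div_neg_of_pos_of_neg hgs (by linarith [hs.2]))
  have hφP : φ ts - P < 0 := by linarith
  nlinarith [mul_neg_of_pos_of_neg hε hφP]

lemma contDiff_Wf (hc : ContDiff ℝ 1 c) (hu : ContDiff ℝ 2 u) (σ : ℝ) :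
    ContDiff ℝ 1 (Wf σ c u) := by
  have hf : ContDiff ℝ 1 (fderiv ℝ u) := hu.fderiv_right (by norm_num)
  exact (hf.clm_apply contDiff_const).add
    (contDiff_const.mul (((hc.comp (hu.of_le one_le_two)).mul (hf.clm_apply contDiff_const))))

lemma Rv_eq (hu : ContDiff ℝ 2 u) : Rv c u = Wf 1 c u := by
  funext p
  have hd : DifferentiableAt ℝ u p := (hu.differentiable two_ne_zero).differentiableAt
  simp [Rv, Wf, pdt_eq hd, pdx_eq hd]

lemma Sv_eq (hu : ContDiff ℝ 2 u) : Sv c u = Wf (-1) c u := by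
  funext p
  have hd : DifferentiableAt ℝ u p := (hu.differentiable two_ne_zero).differentiableAt
  simp [Sv, Wf, pdt_eq hd, pdx_eq hd]; ring

end aux

theorem stmt12 (c : ℝ → ℝ) (u : ℝ × ℝ → ℝ) (clow chigh T P : ℝ)
    (hc : ContDiff ℝ 1 c)
    (hclow : 0 < clow)
    (hcbd : ∀ θ, clow ≤ c θ ∧ c θ ≤ chigh)
    (hcmono : ∀ θ, 0 ≤ deriv c θ)
    (hA : BddAbove (Set.range fun θ : ℝ => deriv c θ / (2 * c θ)))
    (hT : 0 < T)
    (hu : ContDiff ℝ 2 u)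
    (hwave : ∀ p : ℝ × ℝ, p.1 ∈ Set.Icc 0 T →
      pdt (pdt u) p = (c (u p)) ^ 2 * pdx (pdx u) p)
    (hP : 0 ≤ P)
    (hub : ∀ t ∈ Set.Icc 0 T, ∀ x : ℝ, Rv c u (t, x) ≤ P ∧ Sv c u (t, x) ≤ P)
    (hdecay : ∀ ε > (0 : ℝ), ∃ K : ℝ, ∀ x : ℝ, K ≤ |x| →
      ∀ t ∈ Set.Icc 0 T, |Rv c u (t, x)| < ε ∧ |Sv c u (t, x)| < ε)
    (hm0R : BddBelow (Set.range fun x : ℝ => Rv c u (0, x)))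
    (hm0S : BddBelow (Set.range fun x : ℝ => Sv c u (0, x))) :
    ∀ t ∈ Set.Icc 0 T, ∀ x : ℝ,
      P + (min 0 (min (⨅ z : ℝ, Rv c u (0, z)) (⨅ z : ℝ, Sv c u (0, z))) - P) *
          Real.exp ((⨆ θ : ℝ, deriv c θ / (2 * c θ)) * P * t) ≤ Rv c u (t, x) ∧
      P + (min 0 (min (⨅ z : ℝ, Rv c u (0, z)) (⨅ z : ℝ, Sv c u (0, z))) - P) *
          Real.exp ((⨆ θ : ℝ, deriv c θ / (2 * c θ)) * P * t) ≤ Sv c u (t, x) := by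
  have hcpos : ∀ θ, 0 < c θ := fun θ => lt_of_lt_of_le hclow (hcbd θ).1
  set A := ⨆ θ : ℝ, deriv c θ / (2 * c θ) with hAdef
  set m₀ := min 0 (min (⨅ z : ℝ, Rv c u (0, z)) (⨅ z : ℝ, Sv c u (0, z))) with hm₀def
  have hkA : ∀ θ, deriv c θ / (2 * c θ) ≤ A := fun θ => le_ciSup hA θ
  have hA0 : 0 ≤ A := le_trans (div_nonneg (hcmono 0) (by linarith [hcpos 0])) (hkA 0)
  have hm0R' : ∀ x, m₀ ≤ Rv c u (0, x) := fun x =>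
    le_trans (le_trans (min_le_right _ _) (min_le_left _ _)) (ciInf_le hm0R x)
  have hm0S' : ∀ x, m₀ ≤ Sv c u (0, x) := fun x =>
    le_trans (le_trans (min_le_right _ _) (min_le_right _ _)) (ciInf_le hm0S x)
  have hm00 : m₀ ≤ 0 := min_le_left _ _
  have hRW : Rv c u = Wf 1 c u := Rv_eq hu
  have hSW : Sv c u = Wf (-1) c u := Sv_eq hu
  have hRcont : Continuous (Rv c u) := hRW ▸ (contDiff_Wf hc hu 1).continuous
  have hScont : Continuous (Sv c u) := hSW ▸ (contDiff_Wf hc hu (-1)).continuous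
  -- key claim with strict inequality, for every ε > 0
  have key : ∀ ε > (0 : ℝ), ∀ t ∈ Set.Icc 0 T, ∀ x : ℝ,
      P + (m₀ - P - ε) * Real.exp ((A * P + ε) * t)
        < min (Rv c u (t, x)) (Sv c u (t, x)) := by
    intro ε hε
    set φ : ℝ → ℝ := fun t => P + (m₀ - P - ε) * Real.exp ((A * P + ε) * t) with hφdef
    have hφcont : Continuous φ := by
      apply Continuous.add continuous_const
      exact continuous_const.mul (Real.continuous_exp.comp (continuous_const.mul continuous_id))
    have hφ' : ∀ t, HasDerivAt φ ((A * P + ε) * (φ t - P)) t := by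
      intro t
      have h1 : HasDerivAt (fun t : ℝ => (A * P + ε) * t) (A * P + ε) t := by
        simpa using (hasDerivAt_id t).const_mul (A * P + ε)
      have h2 := (Real.hasDerivAt_exp ((A * P + ε) * t)).comp t h1
      have h3 := (h2.const_mul (m₀ - P - ε)).const_add P
      refine HasDerivAt.congr_deriv h3 ?_
      simp only [hφdef]
      ring
    have hφle : ∀ t, 0 ≤ t → φ t ≤ m₀ - ε := by
      intro t ht
      have h1 : 1 ≤ Real.exp ((A * P + ε) * t) := Real.one_le_exp (by positivity)
      have h2 : (0:ℝ) ≤ P + ε - m₀ := by linarith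
      simp only [hφdef]
      nlinarith [mul_nonneg (sub_nonneg.2 h1) h2]
    by_contra hcon
    push_neg at hcon
    obtain ⟨t0, ht0, x0, hx0⟩ := hcon
    set B : Set (ℝ × ℝ) :=
      {q : ℝ × ℝ | q.1 ∈ Set.Icc 0 T ∧ min (Rv c u q) (Sv c u q) ≤ φ q.1} with hBdef
    have hBne : B.Nonempty := ⟨(t0, x0), ht0, hx0⟩
    have hBclosed : IsClosed B := by
      have h1 : IsClosed {q : ℝ × ℝ | q.1 ∈ Set.Icc 0 T} :=
        isClosed_Icc.preimage continuous_fst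
      have h2 : IsClosed {q : ℝ × ℝ | min (Rv c u q) (Sv c u q) ≤ φ q.1} :=
        isClosed_le (hRcont.min hScont) (hφcont.comp continuous_fst)
      exact h1.inter h2
    obtain ⟨K, hK⟩ := hdecay ε hε
    have hBsub : B ⊆ Set.Icc 0 T ×ˢ Set.Icc (-K) K := by
      rintro ⟨t, x⟩ ⟨ht, hmin⟩
      refine ⟨ht, ?_⟩
      rw [Set.mem_Icc, ← abs_le]
      by_contra hxK
      have hKx : K ≤ |x| := le_of_lt (lt_of_not_ge hxK)
      obtain ⟨hR, hS⟩ := hK x hKx t ht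
      have hφt : φ t ≤ -ε := by have := hφle t ht.1; linarith
      rcases min_le_iff.mp hmin with h | h
      · have := (abs_lt.mp hR).1; linarith
      · have := (abs_lt.mp hS).1; linarith
    have hBcpt : IsCompact B :=
      (isCompact_Icc.prod isCompact_Icc).of_isClosed_subset hBclosed hBsub
    obtain ⟨ps, hpsB, hpsmin⟩ := hBcpt.exists_isMinOn hBne continuous_fst.continuousOn
    obtain ⟨hts, hmin⟩ := hpsB
    set ts := ps.1 with htsdef
    set xs := ps.2 with hxsdef
    have hpse : ps = (ts, xs) := rfl
    have htpos : 0 < ts := by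
      by_contra hcon2
      have h0 : ts = 0 := le_antisymm (not_lt.mp hcon2) hts.1
      have hps0 : ps = ((0 : ℝ), xs) := by rw [← h0]
      have hm : m₀ ≤ min (Rv c u ((0:ℝ), xs)) (Sv c u ((0:ℝ), xs)) :=
        le_min (hm0R' xs) (hm0S' xs)
      rw [hps0] at hmin
      have hφ0 : φ ts = m₀ - ε := by
        rw [h0]; simp only [hφdef, mul_zero, Real.exp_zero, mul_one]; ring
      rw [hφ0] at hmin
      linarith
    have hnotB : ∀ s ∈ Set.Ico 0 ts, ∀ y : ℝ,
        φ s < min (Rv c u (s, y)) (Sv c u (s, y)) := by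
      intro s hs y
      by_contra hcon2
      have hsB : (s, y) ∈ B := ⟨⟨hs.1, le_trans (le_of_lt hs.2) hts.2⟩, not_lt.mp hcon2⟩
      have := isMinOn_iff.mp hpsmin (s, y) hsB
      simp only at this
      exact absurd hs.2 (not_lt.mpr this)
    have hfloor : ∀ y, φ ts ≤ min (Rv c u (ts, y)) (Sv c u (ts, y)) := by
      intro y
      set g : ℝ → ℝ := fun s => min (Rv c u (s, y)) (Sv c u (s, y)) - φ s with hgdef
      have hgc : Continuous g := by
        apply Continuous.sub _ hφcont
        exact (hRcont.comp (continuous_id.prodMk continuous_const)).min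
          (hScont.comp (continuous_id.prodMk continuous_const))
      have hcl : ts ∈ closure (Set.Ico (0:ℝ) ts) := by
        rw [closure_Ico (ne_of_lt htpos)]
        exact ⟨le_of_lt htpos, le_rfl⟩
      haveI hne : (nhdsWithin ts (Set.Ico 0 ts)).NeBot :=
        mem_closure_iff_nhdsWithin_neBot.mp hcl
      have h0 : 0 ≤ g ts := by
        have htd : Filter.Tendsto g (nhdsWithin ts (Set.Ico 0 ts)) (nhds (g ts)) :=
          (hgc.tendsto ts).mono_left nhdsWithin_le_nhds
        refine ge_of_tendsto htd ?_
        filter_upwards [self_mem_nhdsWithin] with s hs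
        have := hnotB s hs y
        simp only [hgdef]
        linarith
      simp only [hgdef] at h0
      linarith
    have heq : min (Rv c u ps) (Sv c u ps) = φ ts :=
      le_antisymm hmin (hfloor xs)
    have hwps : pdt (pdt u) (ts, xs) = (c (u (ts, xs))) ^ 2 * pdx (pdx u) (ts, xs) :=
      hwave (ts, xs) hts
    have hφneg : φ ts < 0 := by have := hφle ts hts.1; linarith
    have hRub : ∀ y, Rv c u (ts, y) ≤ P := fun y => (hub ts hts y).1
    have hSub : ∀ y, Sv c u (ts, y) ≤ P := fun y => (hub ts hts y).2
    rcases le_total (Rv c u ps) (Sv c u ps) with hRS | hSR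
    · -- minimum is attained by R; use σ = 1
      have hWeq : Rv c u ps = φ ts := by rw [← heq, min_eq_left hRS]
      refine core hc hu (by norm_num : (1:ℝ) * 1 = 1) htpos hwps (hcpos _) (hcmono _)
        (hkA _) hP hA0 hε (hφ' ts) hφneg ?_ ?_ ?_ ?_ ?_
      · rw [← hRW]; exact hWeq
      · have h1 : (-(1:ℝ)) = -1 := rfl
        rw [h1, ← hSW]
        exact le_trans (hfloor xs) (min_le_right _ _)
      · rw [show (-(1:ℝ)) = -1 from rfl, ← hSW]; exact hSub xs
      · intro y
        rw [← hRW, hWeq]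
        exact le_trans (hfloor y) (min_le_left _ _)
      · intro s hs
        rw [← hRW]
        exact lt_of_lt_of_le (hnotB s hs xs) (min_le_left _ _)
    · -- minimum is attained by S; use σ = -1
      have hWeq : Sv c u ps = φ ts := by rw [← heq, min_eq_right hSR]
      refine core hc hu (by norm_num : (-1:ℝ) * (-1) = 1) htpos hwps (hcpos _) (hcmono _)
        (hkA _) hP hA0 hε (hφ' ts) hφneg ?_ ?_ ?_ ?_ ?_
      · rw [← hSW]; exact hWeq
      · rw [show (-(-1:ℝ)) = 1 from by norm_num, ← hRW]
        exact le_trans (hfloor xs) (min_le_left _ _)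
      · rw [show (-(-1:ℝ)) = 1 from by norm_num, ← hRW]; exact hRub xs
      · intro y
        rw [← hSW, hWeq]
        exact le_trans (hfloor y) (min_le_right _ _)
      · intro s hs
        rw [← hSW]
        exact lt_of_lt_of_le (hnotB s hs xs) (min_le_right _ _)
  -- pass to the limit ε → 0⁺
  intro t ht x
  have h2 : Filter.Tendsto (fun ε : ℝ => P + (m₀ - P - ε) * Real.exp ((A * P + ε) * t))
      (nhdsWithin 0 (Set.Ioi 0)) (nhds (P + (m₀ - P) * Real.exp (A * P * t))) := by
    have hco : Continuous (fun ε : ℝ => P + (m₀ - P - ε) * Real.exp ((A * P + ε) * t)) := by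
      apply Continuous.add continuous_const
      exact ((continuous_const.sub continuous_id)).mul
        (Real.continuous_exp.comp ((continuous_const.add continuous_id).mul continuous_const))
    have htd : Filter.Tendsto (fun ε : ℝ => P + (m₀ - P - ε) * Real.exp ((A * P + ε) * t))
        (nhdsWithin 0 (Set.Ioi 0)) (nhds (P + (m₀ - P - 0) * Real.exp ((A * P + 0) * t))) :=
      (hco.tendsto 0).mono_left nhdsWithin_le_nhds
    simpa using htd
  have h3 : P + (m₀ - P) * Real.exp (A * P * t) ≤ min (Rv c u (t, x)) (Sv c u (t, x)) := by
    refine le_of_tendsto h2 ?_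
    filter_upwards [self_mem_nhdsWithin] with ε hε
    exact le_of_lt (key ε hε t ht x)
  exact ⟨le_trans h3 (min_le_left _ _), le_trans h3 (min_le_right _ _)⟩
end
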